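/- arXiv:2102.08149 — 4 statements merged into one kernel-verified Lean document; each statement's English description precedes it below -/
import Mathlib

section
/- Fix a ∈ (0, π) and a function q : ℝ → ℂ, square-integrable on (0, π), with q(x) = 0 for all x outside (a, π). Fix ρ ∈ ℂ, ρ ≠ 0, and set λ = ρ². For ν ∈ {0,1} let y_{0,0}(x,λ) = cos(ρx), y_{1,0}(x,λ) = sin(ρx)/ρ, and recursively y_{ν,k}(x,λ) = ∫_a^x (sin ρ(x−t)/ρ) q(t) y_{ν,k−1}(t−a, λ) dt for k ≥ 1. Then, for every ν ∈ {0,1}, every k ≥ 1 and every x with 0 ≤ x ≤ min(ka, π), one has y_{ν,k}(x,λ) = 0. -/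
open MeasureTheory Set
open scoped Real

noncomputable def y0 (ρ : ℂ) (ν : ℕ) (x : ℝ) : ℂ :=
  if ν = 0 then Complex.cos (ρ * (x : ℂ)) else Complex.sin (ρ * (x : ℂ)) / ρ

noncomputable def ySeq (a : ℝ) (q : ℝ → ℂ) (ρ : ℂ) (ν : ℕ) : ℕ → ℝ → ℂ
  | 0 => y0 ρ ν
  | k + 1 => fun x => ∫ t in a..x,
      (Complex.sin (ρ * ((x - t : ℝ) : ℂ)) / ρ) * q t * ySeq a q ρ ν k (t - a)

/-! Since `q` vanishes left of `a`, the integrand of `ySeq (k + 1) x` only sees `ySeq k` on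
`(0, x - a]`; each step of the recursion therefore pushes the zero set of `ySeq` a further `a`
to the right. -/

section Vanishing

variable {a : ℝ} {q : ℝ → ℂ} {ρ : ℂ} {ν : ℕ}

theorem ySeq_succ_eq_zero_of_forall_Ioc (hq : ∀ t ≤ a, q t = 0) {k : ℕ} {x : ℝ}
    (h : ∀ t ∈ Ioc a x, ySeq a q ρ ν k (t - a) = 0) : ySeq a q ρ ν (k + 1) x = 0 := by
  refine (intervalIntegral.integral_congr (g := fun _ => (0 : ℂ)) fun t ht => ?_).trans
    intervalIntegral.integral_zero
  rcases le_or_gt t a with hta | hta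
  · simp [hq t hta]
  · have htx : t ≤ x := (le_max_iff.mp ht.2).resolve_left hta.not_ge
    simp [h t ⟨hta, htx⟩]

theorem ySeq_succ_eq_zero_of_le (hq : ∀ t ≤ a, q t = 0) :
    ∀ (k : ℕ) (x : ℝ), x ≤ ((k + 1 : ℕ) : ℝ) * a → ySeq a q ρ ν (k + 1) x = 0
  | 0, x, hx => ySeq_succ_eq_zero_of_forall_Ioc hq fun t ht => by
      push_cast at hx
      linarith [ht.1, ht.2]
  | k + 1, x, hx => ySeq_succ_eq_zero_of_forall_Ioc hq fun t ht =>
      ySeq_succ_eq_zero_of_le hq k (t - a) (by push_cast at hx ⊢; linarith [ht.2])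

end Vanishing

theorem statement0_general
    (a : ℝ)
    (q : ℝ → ℂ)
    (hq0 : ∀ x : ℝ, x ∉ Set.Ioo a π → q x = 0)
    (ρ : ℂ) :
    ∀ ν : ℕ, (ν = 0 ∨ ν = 1) → ∀ k : ℕ, 1 ≤ k →
      ∀ x : ℝ, 0 ≤ x → x ≤ min (k * a) π → ySeq a q ρ ν k x = 0 := by
  intro ν _ k hk x _ hx
  obtain ⟨m, rfl⟩ := Nat.exists_eq_add_of_le' hk
  exact ySeq_succ_eq_zero_of_le (fun t ht => hq0 t fun h => ht.not_gt h.1) m x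
    (le_min_iff.mp hx).1

theorem statement0
    (a : ℝ) (ha : a ∈ Set.Ioo 0 π)
    (q : ℝ → ℂ)
    (hq2 : MemLp q 2 (volume.restrict (Set.Ioo 0 π)))
    (hq0 : ∀ x : ℝ, x ∉ Set.Ioo a π → q x = 0)
    (ρ : ℂ) (hρ : ρ ≠ 0) (lam : ℂ) (hlam : lam = ρ ^ 2) :
    ∀ ν : ℕ, (ν = 0 ∨ ν = 1) → ∀ k : ℕ, 1 ≤ k →
      ∀ x : ℝ, 0 ≤ x → x ≤ min (k * a) π → ySeq a q ρ ν k x = 0 :=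
  statement0_general a q hq0 ρ
end

section
/- Fix a ∈ (0, π) and a function q : ℝ → ℂ, square-integrable on (0, π), with q(x) = 0 for all x outside (a, π). Fix ρ ∈ ℂ, ρ ≠ 0, λ = ρ². For ν ∈ {0,1} let y_{0,0}(x,λ) = cos(ρx), y_{1,0}(x,λ) = sin(ρx)/ρ, and y_{ν,k}(x,λ) = ∫_a^x (sin ρ(x−t)/ρ) q(t) y_{ν,k−1}(t−a, λ) dt for k = 1, 2. For ν ∈ {0,1} define P_ν(x,t) = (∫_{t+a/2}^{x} q(τ) dτ)(∫_a^{t−a/2} q(ξ) dξ) + (−1)^ν ∫_a^{x−t+a/2} q(τ) (∫_{t+τ−a/2}^{x} q(ξ) dξ) dτ, for 3a/2 ≤ t ≤ x − a/2 ≤ π − a/2. Then for every ν ∈ {0,1} and every x with 2a ≤ x ≤ π: y_{ν,2}(x,λ) = (1/(2λ^ν)) ∫_{3a/2}^{x−a/2} P_ν(x,t) y_{1−ν,0}(x−2t+a, λ) dt. -/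
/-
Expanding the two successive approximations, `y_{ν,2}(x)` is the double integral of
`q t * q u` against `sin ρ(x-t) sin ρ(t-a-u) y_{ν,0}(u-a) / ρ²` over `a < u < t - a < x - a`.
The product-to-sum formulas turn this trigonometric kernel into
`(1 / (2 λ^ν)) (∫_{u+a/2}^{t-a/2} w + (-1)^ν ∫_{3a/2}^{t-u+a/2} w)` with
`w s = y_{1-ν,0}(x - 2s + a)`, so `y_{ν,2}(x)` becomes a triple integral. Interchanging the order
of integration over triangles (regions between graphs) until `s` is outermost leaves
`∫ P_ν(x,s) w(s) ds`. Because `q` vanishes on `(-∞, a]`, the parts where an interval of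
integration is reversed contribute nothing.
-/

open MeasureTheory Set
open scoped Real

noncomputable def Pfun (a : ℝ) (q : ℝ → ℂ) (ν : ℕ) (x t : ℝ) : ℂ :=
  (∫ τ in (t + a / 2)..x, q τ) * (∫ ξ in a..(t - a / 2), q ξ)
    + (-1) ^ ν * ∫ τ in a..(x - t + a / 2), q τ * (∫ ξ in (t + τ - a / 2)..x, q ξ)

theorem integrable_of_memLp_restrict {α E : Type*} [MeasurableSpace α] {μ : Measure α}
    [NormedAddCommGroup E] {f : α → E} {s : Set α} {p : ENNReal} (hp : 1 ≤ p) (hs : μ s ≠ ⊤)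
    (hf : MemLp f p (μ.restrict s)) (h0 : ∀ x ∉ s, f x = 0) : Integrable f μ :=
  haveI := isFiniteMeasure_restrict.2 hs
  IntegrableOn.integrable_of_forall_notMem_eq_zero (hf.integrable hp) h0

theorem continuous_intervalIntegral_comp {X E : Type*} [TopologicalSpace X] [NormedAddCommGroup E]
    [NormedSpace ℝ E] {f : ℝ → E} (hf : LocallyIntegrable f) {α β : X → ℝ}
    (hα : Continuous α) (hβ : Continuous β) :
    Continuous fun y => ∫ s in α y..β y, f s := by
  have hint : ∀ l r : ℝ, IntervalIntegrable f volume l r := fun _ _ =>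
    (hf.integrableOn_isCompact isCompact_uIcc).intervalIntegrable
  have hprim := intervalIntegral.continuous_primitive hint 0
  have heq : (fun y => ∫ s in α y..β y, f s)
      = fun y => (∫ s in 0..β y, f s) - ∫ s in 0..α y, f s := by
    funext y
    rw [intervalIntegral.integral_interval_sub_left (hint _ _) (hint _ _)]
  rw [heq]
  exact (hprim.comp hβ).sub (hprim.comp hα)

section RegionBetween

variable {E : Type*} [NormedAddCommGroup E] [NormedSpace ℝ E]

theorem intervalIntegral_eq_integral_indicator_regionBetween (f : ℝ → ℝ → E)
    {c d : ℝ} {φ ψ : ℝ → ℝ} {u : ℝ} (hu : u ∈ Ioo c d)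
    (horient : φ u ≤ ψ u ∨ ∀ s ∈ uIcc (φ u) (ψ u), f u s = 0) :
    ∫ s in φ u..ψ u, f u s
      = ∫ s, (regionBetween φ ψ (Ioo c d)).indicator (fun p => f p.1 p.2) (u, s) := by
  have hslice : ∀ s, (regionBetween φ ψ (Ioo c d)).indicator (fun p => f p.1 p.2) (u, s)
      = (Ioo (φ u) (ψ u)).indicator (f u) s := fun s => by
    by_cases hs : s ∈ Ioo (φ u) (ψ u)
    · rw [indicator_of_mem hs, indicator_of_mem (show (u, s) ∈ regionBetween φ ψ (Ioo c d)
        from ⟨hu, hs⟩)]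
    · rw [indicator_of_notMem hs, indicator_of_notMem fun h => hs h.2]
  simp only [hslice, integral_indicator measurableSet_Ioo]
  rcases le_or_gt (φ u) (ψ u) with hle | hlt
  · rw [intervalIntegral.integral_of_le hle, integral_Ioc_eq_integral_Ioo]
  · have hzero : ∀ s ∈ uIcc (φ u) (ψ u), f u s = 0 :=
      horient.resolve_left (not_le.2 hlt)
    rw [intervalIntegral.integral_congr hzero, Ioo_eq_empty (not_lt.2 hlt.le)]
    simp

theorem intervalIntegral_intervalIntegral_eq_integral_integral_indicator (f : ℝ → ℝ → E)
    {c d : ℝ} {φ ψ : ℝ → ℝ} (hcd : c ≤ d)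
    (horient : ∀ u ∈ Ioo c d, φ u ≤ ψ u ∨ ∀ s ∈ uIcc (φ u) (ψ u), f u s = 0) :
    ∫ u in c..d, ∫ s in φ u..ψ u, f u s
      = ∫ u, ∫ s, (regionBetween φ ψ (Ioo c d)).indicator (fun p => f p.1 p.2) (u, s) := by
  rw [intervalIntegral.integral_of_le hcd, integral_Ioc_eq_integral_Ioo,
    setIntegral_congr_fun measurableSet_Ioo fun u hu =>
      intervalIntegral_eq_integral_indicator_regionBetween f hu (horient u hu),
    ← integral_indicator measurableSet_Ioo]
  congr 1 with u
  by_cases hu : u ∈ Ioo c d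
  · rw [indicator_of_mem hu]
  · rw [indicator_of_notMem hu]
    simp [indicator_of_notMem fun h : (u, _) ∈ regionBetween φ ψ (Ioo c d) => hu h.1]

theorem intervalIntegral_intervalIntegral_swap_regionBetween (f : ℝ → ℝ → E)
    {c₁ d₁ c₂ d₂ : ℝ} {φ₁ ψ₁ φ₂ ψ₂ : ℝ → ℝ} (hcd₁ : c₁ ≤ d₁) (hcd₂ : c₂ ≤ d₂)
    (hφ₁ : Measurable φ₁) (hψ₁ : Measurable ψ₁)
    (horient₁ : ∀ u ∈ Ioo c₁ d₁, φ₁ u ≤ ψ₁ u ∨ ∀ s ∈ uIcc (φ₁ u) (ψ₁ u), f u s = 0)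
    (horient₂ : ∀ s ∈ Ioo c₂ d₂, φ₂ s ≤ ψ₂ s ∨ ∀ u ∈ uIcc (φ₂ s) (ψ₂ s), f u s = 0)
    (hregion : ∀ u s, (u, s) ∈ regionBetween φ₁ ψ₁ (Ioo c₁ d₁)
      ↔ (s, u) ∈ regionBetween φ₂ ψ₂ (Ioo c₂ d₂))
    (hf : IntegrableOn (fun p : ℝ × ℝ => f p.1 p.2) (regionBetween φ₁ ψ₁ (Ioo c₁ d₁))) :
    ∫ u in c₁..d₁, ∫ s in φ₁ u..ψ₁ u, f u s = ∫ s in c₂..d₂, ∫ u in φ₂ s..ψ₂ s, f u s := by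
  rw [intervalIntegral_intervalIntegral_eq_integral_integral_indicator f hcd₁ horient₁,
    intervalIntegral_intervalIntegral_eq_integral_integral_indicator (fun s u => f u s) hcd₂
      horient₂]
  have hint := (integrable_indicator_iff
    (measurableSet_regionBetween hφ₁ hψ₁ measurableSet_Ioo)).2 hf
  rw [Measure.volume_eq_prod] at hint
  rw [integral_integral_swap (f := fun u s =>
    (regionBetween φ₁ ψ₁ (Ioo c₁ d₁)).indicator (fun p => f p.1 p.2) (u, s)) hint]
  congr 1 with s
  congr 1 with u
  by_cases h : (u, s) ∈ regionBetween φ₁ ψ₁ (Ioo c₁ d₁)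
  · rw [indicator_of_mem h, indicator_of_mem ((hregion u s).1 h)]
  · rw [indicator_of_notMem h, indicator_of_notMem fun h' => h ((hregion u s).2 h')]

end RegionBetween

theorem integrableOn_regionBetween_mul {g h : ℝ → ℂ} {e : ℝ × ℝ → ℂ}
    (hg : LocallyIntegrable g) (hh : LocallyIntegrable h) (he : Continuous e)
    {c d : ℝ} {φ ψ : ℝ → ℝ} (hφ : Continuous φ) (hψ : Continuous ψ) :
    IntegrableOn (fun p : ℝ × ℝ => g p.1 * h p.2 * e p) (regionBetween φ ψ (Ioo c d)) := by
  obtain ⟨M₁, hM₁⟩ := (isCompact_Icc (a := c) (b := d)).exists_bound_of_continuousOn hφ.continuousOn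
  obtain ⟨M₂, hM₂⟩ := (isCompact_Icc (a := c) (b := d)).exists_bound_of_continuousOn hψ.continuousOn
  set K := Icc c d ×ˢ Icc (-M₁) M₂
  have hsub : regionBetween φ ψ (Ioo c d) ⊆ K := by
    rintro ⟨u, s⟩ ⟨hu, hs⟩
    have h₁ := neg_le_of_abs_le (hM₁ u (Ioo_subset_Icc_self hu))
    have h₂ := le_of_abs_le (hM₂ u (Ioo_subset_Icc_self hu))
    exact ⟨Ioo_subset_Icc_self hu, by linarith [hs.1], by linarith [hs.2]⟩
  have hK : IsCompact K := isCompact_Icc.prod isCompact_Icc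
  have hgh : IntegrableOn (fun p : ℝ × ℝ => g p.1 * h p.2) K := by
    rw [IntegrableOn, Measure.volume_eq_prod, ← Measure.prod_restrict]
    exact (hg.integrableOn_isCompact isCompact_Icc).mul_prod
      (hh.integrableOn_isCompact isCompact_Icc)
  exact ((hgh.mul_continuousOn he.continuousOn hK).mono_set hsub)

theorem Complex.sin_mul_sin_mul_cos (A B C : ℂ) :
    Complex.sin A * Complex.sin B * Complex.cos C
      = (Complex.cos (A - B - C) - Complex.cos (A + B - C)
          + Complex.cos (A - B + C) - Complex.cos (A + B + C)) / 4 := by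
  simp only [Complex.cos_add, Complex.cos_sub, Complex.sin_add, Complex.sin_sub]
  ring

theorem Complex.sin_mul_sin_mul_sin (A B C : ℂ) :
    Complex.sin A * Complex.sin B * Complex.sin C
      = (Complex.sin (A - B + C) - Complex.sin (A - B - C)
          - Complex.sin (A + B + C) + Complex.sin (A + B - C)) / 4 := by
  simp only [Complex.cos_add, Complex.cos_sub, Complex.sin_add, Complex.sin_sub]
  ring

section Kernel

variable {a x t : ℝ} {q w : ℝ → ℂ}

theorem intervalIntegral_eq_zero_of_le {r : ℝ} (hqa : ∀ r ≤ a, q r = 0)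
    (hr : r ≤ a) : ∫ ξ in a..r, q ξ = 0 := by
  rw [intervalIntegral.integral_congr (g := fun _ => 0) fun ξ hξ =>
    hqa ξ (uIcc_of_ge hr ▸ hξ).2]
  simp

theorem intervalIntegral_mul_integral_swap_upper (hq : LocallyIntegrable q) (hw : Continuous w)
    (ht : 2 * a ≤ t) :
    ∫ u in a..t - a, q u * ∫ s in u + a / 2..t - a / 2, w s
      = ∫ s in 3 * a / 2..t - a / 2, (∫ ξ in a..s - a / 2, q ξ) * w s := by
  have hint : IntegrableOn (fun p : ℝ × ℝ => q p.1 * w p.2)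
      (regionBetween (fun u => u + a / 2) (fun _ => t - a / 2) (Ioo a (t - a))) := by
    simpa using integrableOn_regionBetween_mul hq (locallyIntegrable_const 1)
      (e := fun p => w p.2) (by fun_prop) (by fun_prop) continuous_const
  have hswap : ∫ u in a..t - a, ∫ s in u + a / 2..t - a / 2, q u * w s
      = ∫ s in 3 * a / 2..t - a / 2, ∫ u in a..s - a / 2, q u * w s :=
    intervalIntegral_intervalIntegral_swap_regionBetween _ (by linarith) (by linarith)
      (by fun_prop) measurable_const
      (fun u hu => Or.inl (by linarith [hu.2])) (fun s hs => Or.inl (by linarith [hs.1]))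
      (fun u s => by
        constructor <;> rintro ⟨⟨h₁, h₂⟩, h₃, h₄⟩ <;> refine ⟨⟨?_, ?_⟩, ?_, ?_⟩ <;> linarith)
      hint
  simpa only [intervalIntegral.integral_const_mul, intervalIntegral.integral_mul_const] using hswap

theorem intervalIntegral_mul_integral_swap_lower (hq : LocallyIntegrable q) (hw : Continuous w)
    (ht : 2 * a ≤ t) :
    ∫ u in a..t - a, q u * ∫ s in 3 * a / 2..t - u + a / 2, w s
      = ∫ s in 3 * a / 2..t - a / 2, (∫ ξ in a..t - s + a / 2, q ξ) * w s := by
  have hint : IntegrableOn (fun p : ℝ × ℝ => q p.1 * w p.2)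
      (regionBetween (fun _ => 3 * a / 2) (fun u => t - u + a / 2) (Ioo a (t - a))) := by
    simpa using integrableOn_regionBetween_mul hq (locallyIntegrable_const 1)
      (e := fun p => w p.2) (by fun_prop) continuous_const (by fun_prop)
  have hswap : ∫ u in a..t - a, ∫ s in 3 * a / 2..t - u + a / 2, q u * w s
      = ∫ s in 3 * a / 2..t - a / 2, ∫ u in a..t - s + a / 2, q u * w s :=
    intervalIntegral_intervalIntegral_swap_regionBetween _ (by linarith) (by linarith)
      measurable_const (by fun_prop)
      (fun u hu => Or.inl (by linarith [hu.2])) (fun s hs => Or.inl (by linarith [hs.2]))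
      (fun u s => by
        constructor <;> rintro ⟨⟨h₁, h₂⟩, h₃, h₄⟩ <;> refine ⟨⟨?_, ?_⟩, ?_, ?_⟩ <;> linarith)
      hint
  simpa only [intervalIntegral.integral_const_mul, intervalIntegral.integral_mul_const] using hswap

theorem intervalIntegral_mul_kernel_eq (hq : LocallyIntegrable q) (hqa : ∀ r ≤ a, q r = 0)
    (hw : Continuous w) (ε : ℂ) :
    ∫ u in a..t - a, q u * ((∫ s in u + a / 2..t - a / 2, w s)
        + ε * ∫ s in 3 * a / 2..t - u + a / 2, w s)
      = ∫ s in 3 * a / 2..t - a / 2,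
          ((∫ ξ in a..s - a / 2, q ξ) + ε * ∫ ξ in a..t - s + a / 2, q ξ) * w s := by
  rcases le_or_gt (2 * a) t with ht | ht
  · have hqi : IntervalIntegrable q volume a (t - a) :=
      (hq.integrableOn_isCompact isCompact_uIcc).intervalIntegrable
    have hupper : IntervalIntegrable (fun u => q u * ∫ s in u + a / 2..t - a / 2, w s)
        volume a (t - a) := hqi.mul_continuousOn (continuous_intervalIntegral_comp
          hw.locallyIntegrable (by fun_prop) continuous_const).continuousOn
    have hlower : IntervalIntegrable (fun u => q u * ∫ s in 3 * a / 2..t - u + a / 2, w s)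
        volume a (t - a) := hqi.mul_continuousOn (continuous_intervalIntegral_comp
          hw.locallyIntegrable continuous_const (by fun_prop)).continuousOn
    have hQ₁ : Continuous fun s => (∫ ξ in a..s - a / 2, q ξ) * w s :=
      (continuous_intervalIntegral_comp hq continuous_const (by fun_prop)).mul hw
    have hQ₂ : Continuous fun s => (∫ ξ in a..t - s + a / 2, q ξ) * w s :=
      (continuous_intervalIntegral_comp hq continuous_const (by fun_prop)).mul hw
    calc _ = ∫ u in a..t - a, q u * (∫ s in u + a / 2..t - a / 2, w s)
          + ε * (q u * ∫ s in 3 * a / 2..t - u + a / 2, w s) :=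
          intervalIntegral.integral_congr fun _ _ => by ring
      _ = (∫ s in 3 * a / 2..t - a / 2, (∫ ξ in a..s - a / 2, q ξ) * w s)
          + ε * ∫ s in 3 * a / 2..t - a / 2, (∫ ξ in a..t - s + a / 2, q ξ) * w s := by
        rw [intervalIntegral.integral_add hupper (hlower.const_mul ε),
          intervalIntegral.integral_const_mul, intervalIntegral_mul_integral_swap_upper hq hw ht,
          intervalIntegral_mul_integral_swap_lower hq hw ht]
      _ = _ := by
        rw [← intervalIntegral.integral_const_mul, ← intervalIntegral.integral_add
          (hQ₁.intervalIntegrable _ _) ((hQ₂.intervalIntegrable _ _).const_mul ε)]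
        exact intervalIntegral.integral_congr fun _ _ => by ring
  · have hL : ∀ u ∈ uIcc a (t - a), q u * ((∫ s in u + a / 2..t - a / 2, w s)
        + ε * ∫ s in 3 * a / 2..t - u + a / 2, w s) = 0 := fun u hu => by
      rw [uIcc_of_ge (by linarith)] at hu
      rw [hqa u hu.2, zero_mul]
    have hR : ∀ s ∈ uIcc (3 * a / 2) (t - a / 2),
        ((∫ ξ in a..s - a / 2, q ξ) + ε * ∫ ξ in a..t - s + a / 2, q ξ) * w s = 0 := fun s hs => by
      rw [uIcc_of_ge (by linarith)] at hs
      rw [intervalIntegral_eq_zero_of_le hqa (by linarith [hs.2]),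
        intervalIntegral_eq_zero_of_le hqa (by linarith [hs.1])]
      ring
    rw [intervalIntegral.integral_congr hL, intervalIntegral.integral_congr hR]
    simp

theorem intervalIntegral_mul_intervalIntegral_swap (hq : LocallyIntegrable q) {s : ℝ}
    (hsx : s + a / 2 ≤ x) :
    ∫ t in s + a / 2..x, q t * ∫ ξ in a..t - s + a / 2, q ξ
      = ∫ τ in a..x - s + a / 2, q τ * ∫ ξ in s + τ - a / 2..x, q ξ := by
  have hint : IntegrableOn (fun p : ℝ × ℝ => q p.1 * q p.2)
      (regionBetween (fun _ => a) (fun t => t - s + a / 2) (Ioo (s + a / 2) x)) := by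
    simpa using integrableOn_regionBetween_mul hq hq (e := fun _ => 1) continuous_const
      continuous_const (by fun_prop : Continuous fun t : ℝ => t - s + a / 2)
  have hswap : ∫ t in s + a / 2..x, ∫ ξ in a..t - s + a / 2, q t * q ξ
      = ∫ ξ in a..x - s + a / 2, ∫ t in s + ξ - a / 2..x, q t * q ξ :=
    intervalIntegral_intervalIntegral_swap_regionBetween _ hsx (by linarith)
      measurable_const (by fun_prop)
      (fun t ht => Or.inl (by linarith [ht.1])) (fun ξ hξ => Or.inl (by linarith [hξ.2]))
      (fun t ξ => by
        constructor <;> rintro ⟨⟨h₁, h₂⟩, h₃, h₄⟩ <;> refine ⟨⟨?_, ?_⟩, ?_, ?_⟩ <;> linarith)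
      hint
  simp only [intervalIntegral.integral_const_mul, intervalIntegral.integral_mul_const] at hswap
  simpa only [mul_comm] using hswap

theorem intervalIntegral_mul_primitives_eq_Pfun (hq : LocallyIntegrable q) (ν : ℕ) {s : ℝ}
    (hsx : s + a / 2 ≤ x) :
    ∫ t in s + a / 2..x,
        q t * ((∫ ξ in a..s - a / 2, q ξ) + (-1) ^ ν * ∫ ξ in a..t - s + a / 2, q ξ)
      = Pfun a q ν x s := by
  have hqi : IntervalIntegrable q volume (s + a / 2) x :=
    (hq.integrableOn_isCompact isCompact_uIcc).intervalIntegrable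
  have hQ : IntervalIntegrable (fun t => q t * ∫ ξ in a..t - s + a / 2, q ξ) volume (s + a / 2) x :=
    hqi.mul_continuousOn
      (continuous_intervalIntegral_comp hq continuous_const (by fun_prop)).continuousOn
  calc _ = (∫ t in s + a / 2..x, q t) * (∫ ξ in a..s - a / 2, q ξ)
        + (-1) ^ ν * ∫ t in s + a / 2..x, q t * ∫ ξ in a..t - s + a / 2, q ξ := by
        rw [← intervalIntegral.integral_mul_const, ← intervalIntegral.integral_const_mul,
          ← intervalIntegral.integral_add (hqi.mul_const _) (hQ.const_mul _)]
        exact intervalIntegral.integral_congr fun _ _ => by ring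
    _ = Pfun a q ν x s := by rw [intervalIntegral_mul_intervalIntegral_swap hq hsx, Pfun]

theorem intervalIntegral_kernel_eq_integral_Pfun (ha : 0 < a) (hax : 2 * a ≤ x)
    (hq : LocallyIntegrable q) (hqa : ∀ r ≤ a, q r = 0) (hw : Continuous w) (ν : ℕ) :
    ∫ t in a..x, ∫ u in a..t - a, q t * q u * ((∫ s in u + a / 2..t - a / 2, w s)
        + (-1) ^ ν * ∫ s in 3 * a / 2..t - u + a / 2, w s)
      = ∫ s in 3 * a / 2..x - a / 2, Pfun a q ν x s * w s := by
  set Q : ℝ → ℝ → ℂ := fun t s =>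
    (∫ ξ in a..s - a / 2, q ξ) + (-1) ^ ν * ∫ ξ in a..t - s + a / 2, q ξ with hQ
  have hQc : Continuous fun p : ℝ × ℝ => Q p.1 p.2 * w p.2 :=
    ((continuous_intervalIntegral_comp hq continuous_const (by fun_prop)).add
      (continuous_const.mul (continuous_intervalIntegral_comp hq continuous_const
        (by fun_prop)))).mul (hw.comp continuous_snd)
  -- `Q` vanishes on the reversed `s`-intervals that occur for `t < 2 * a`
  have hQa : ∀ t s, t - a / 2 ≤ s → s ≤ 3 * a / 2 → Q t s = 0 := fun t s h₁ h₂ => by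
    simp only [hQ]
    rw [intervalIntegral_eq_zero_of_le hqa (by linarith),
      intervalIntegral_eq_zero_of_le hqa (by linarith)]
    ring
  have hint : IntegrableOn (fun p : ℝ × ℝ => q p.1 * (Q p.1 p.2 * w p.2))
      (regionBetween (fun _ => 3 * a / 2) (fun t => t - a / 2) (Ioo a x)) := by
    simpa using integrableOn_regionBetween_mul hq (locallyIntegrable_const 1) hQc
      continuous_const (by fun_prop)
  calc _ = ∫ t in a..x, ∫ s in 3 * a / 2..t - a / 2, q t * (Q t s * w s) :=
        intervalIntegral.integral_congr fun t _ => by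
          simp_rw [mul_assoc (q t), intervalIntegral.integral_const_mul,
            intervalIntegral_mul_kernel_eq hq hqa hw]
          rfl
    _ = ∫ s in 3 * a / 2..x - a / 2, ∫ t in s + a / 2..x, q t * (Q t s * w s) :=
        intervalIntegral_intervalIntegral_swap_regionBetween (fun t s => q t * (Q t s * w s))
          (by linarith) (by linarith) measurable_const (by fun_prop)
          (fun t _ => (le_or_gt (2 * a) t).imp (fun ht => by linarith) fun ht s hs => by
            rw [uIcc_of_ge (by linarith)] at hs
            rw [hQa t s hs.1 hs.2, zero_mul, mul_zero])
          (fun s hs => Or.inl (by linarith [hs.2]))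
          (fun t s => by
            constructor <;> rintro ⟨⟨h₁, h₂⟩, h₃, h₄⟩ <;> refine ⟨⟨?_, ?_⟩, ?_, ?_⟩ <;> linarith)
          hint
    _ = _ := intervalIntegral.integral_congr fun s hs => by
        rw [uIcc_of_le (by linarith), mem_Icc] at hs
        simp_rw [← mul_assoc, intervalIntegral.integral_mul_const]
        rw [intervalIntegral_mul_primitives_eq_Pfun hq ν (by linarith)]

end Kernel

theorem hasDerivAt_mul_ofReal_reflect (ρ : ℂ) (x a s : ℝ) :
    HasDerivAt (fun s : ℝ => ρ * ((x - 2 * s + a : ℝ) : ℂ)) (-2 * ρ) s :=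
  (((((hasDerivAt_id s).const_mul 2).const_sub x).add_const a).ofReal_comp.const_mul
    ρ).congr_deriv (by push_cast; ring)

theorem integral_y0_one_reflect {ρ : ℂ} (hρ : ρ ≠ 0) (x a α β : ℝ) :
    ∫ s in α..β, y0 ρ 1 (x - 2 * s + a)
      = (Complex.cos (ρ * ((x - 2 * β + a : ℝ) : ℂ))
          - Complex.cos (ρ * ((x - 2 * α + a : ℝ) : ℂ))) / (2 * ρ ^ 2) := by
  have hderiv : ∀ s, HasDerivAt
      (fun s : ℝ => Complex.cos (ρ * ((x - 2 * s + a : ℝ) : ℂ)) / (2 * ρ ^ 2))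
      (y0 ρ 1 (x - 2 * s + a)) s := fun s => by
    refine ((Complex.hasDerivAt_cos _).comp s
      (hasDerivAt_mul_ofReal_reflect ρ x a s)).div_const (2 * ρ ^ 2) |>.congr_deriv ?_
    simp only [y0, one_ne_zero, if_false]
    field_simp
  rw [intervalIntegral.integral_eq_sub_of_hasDerivAt (fun s _ => hderiv s)
    ((by simp only [y0, one_ne_zero, if_false]; fun_prop :
      Continuous fun s : ℝ => y0 ρ 1 (x - 2 * s + a)).intervalIntegrable _ _), sub_div]

theorem integral_y0_zero_reflect {ρ : ℂ} (hρ : ρ ≠ 0) (x a α β : ℝ) :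
    ∫ s in α..β, y0 ρ 0 (x - 2 * s + a)
      = (Complex.sin (ρ * ((x - 2 * α + a : ℝ) : ℂ))
          - Complex.sin (ρ * ((x - 2 * β + a : ℝ) : ℂ))) / (2 * ρ) := by
  have hderiv : ∀ s, HasDerivAt
      (fun s : ℝ => -Complex.sin (ρ * ((x - 2 * s + a : ℝ) : ℂ)) / (2 * ρ))
      (y0 ρ 0 (x - 2 * s + a)) s := fun s => by
    refine ((Complex.hasDerivAt_sin _).comp s
      (hasDerivAt_mul_ofReal_reflect ρ x a s)).neg.div_const (2 * ρ) |>.congr_deriv ?_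
    simp only [y0, if_true]
    field_simp
  rw [intervalIntegral.integral_eq_sub_of_hasDerivAt (fun s _ => hderiv s)
    ((by simp only [y0, if_true]; fun_prop :
      Continuous fun s : ℝ => y0 ρ 0 (x - 2 * s + a)).intervalIntegrable _ _)]
  ring

theorem sin_mul_sin_mul_y0_eq {ρ : ℂ} (hρ : ρ ≠ 0) {ν : ℕ} (hν : ν = 0 ∨ ν = 1) (x a t u : ℝ) :
    Complex.sin (ρ * ((x - t : ℝ) : ℂ)) / ρ * (Complex.sin (ρ * ((t - a - u : ℝ) : ℂ)) / ρ)
        * y0 ρ ν (u - a)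
      = 1 / (2 * (ρ ^ 2) ^ ν) * ((∫ s in u + a / 2..t - a / 2, y0 ρ (1 - ν) (x - 2 * s + a))
          + (-1) ^ ν * ∫ s in 3 * a / 2..t - u + a / 2, y0 ρ (1 - ν) (x - 2 * s + a)) := by
  generalize hA : ρ * ((x - t : ℝ) : ℂ) = A
  generalize hB : ρ * ((t - a - u : ℝ) : ℂ) = B
  generalize hC : ρ * ((u - a : ℝ) : ℂ) = C
  have e₁ : ρ * ((x - 2 * (t - a / 2) + a : ℝ) : ℂ) = A - B - C := by
    rw [← hA, ← hB, ← hC]; push_cast; ring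
  have e₂ : ρ * ((x - 2 * (u + a / 2) + a : ℝ) : ℂ) = A + B - C := by
    rw [← hA, ← hB, ← hC]; push_cast; ring
  have e₃ : ρ * ((x - 2 * (t - u + a / 2) + a : ℝ) : ℂ) = A - B + C := by
    rw [← hA, ← hB, ← hC]; push_cast; ring
  have e₄ : ρ * ((x - 2 * (3 * a / 2) + a : ℝ) : ℂ) = A + B + C := by
    rw [← hA, ← hB, ← hC]; push_cast; ring
  rcases hν with rfl | rfl
  · rw [integral_y0_one_reflect hρ, integral_y0_one_reflect hρ]
    simp only [e₁, e₂, e₃, e₄, y0, if_true, hC]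
    field_simp
    linear_combination 4 * Complex.sin_mul_sin_mul_cos A B C
  · rw [integral_y0_zero_reflect hρ, integral_y0_zero_reflect hρ]
    simp only [e₁, e₂, e₃, e₄, y0, one_ne_zero, if_false, hC]
    field_simp
    linear_combination 4 * Complex.sin_mul_sin_mul_sin A B C

theorem ySeq_two_eq (a : ℝ) (q : ℝ → ℂ) (ρ : ℂ) (ν : ℕ) (x : ℝ) :
    ySeq a q ρ ν 2 x = ∫ t in a..x, ∫ u in a..t - a, q t * q u
      * (Complex.sin (ρ * ((x - t : ℝ) : ℂ)) / ρ * (Complex.sin (ρ * ((t - a - u : ℝ) : ℂ)) / ρ)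
        * y0 ρ ν (u - a)) := by
  refine intervalIntegral.integral_congr fun t _ => ?_
  simp only [ySeq]
  rw [← intervalIntegral.integral_const_mul]
  exact intervalIntegral.integral_congr fun u _ => by ring

theorem statement3
    (a : ℝ) (ha : a ∈ Set.Ioo 0 π)
    (q : ℝ → ℂ)
    (hq2 : MemLp q 2 (volume.restrict (Set.Ioo 0 π)))
    (hq0 : ∀ x : ℝ, x ∉ Set.Ioo a π → q x = 0)
    (ρ : ℂ) (hρ : ρ ≠ 0) (lam : ℂ) (hlam : lam = ρ ^ 2) :
    ∀ ν : ℕ, (ν = 0 ∨ ν = 1) → ∀ x : ℝ, 2 * a ≤ x → x ≤ π →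
      ySeq a q ρ ν 2 x
        = (1 / (2 * lam ^ ν)) *
            ∫ t in (3 * a / 2)..(x - a / 2), Pfun a q ν x t * y0 ρ (1 - ν) (x - 2 * t + a) := by
  intro ν hν x hax _
  have hq : LocallyIntegrable q :=
    (integrable_of_memLp_restrict one_le_two (by simp) hq2 fun r hr =>
      hq0 r fun h => hr ⟨ha.1.trans h.1, h.2⟩).locallyIntegrable
  have hqa : ∀ r ≤ a, q r = 0 := fun r hr => hq0 r fun h => (not_lt.2 hr) h.1
  have hw : Continuous fun s : ℝ => y0 ρ (1 - ν) (x - 2 * s + a) := by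
    unfold y0; split_ifs <;> fun_prop
  rw [ySeq_two_eq, hlam, ← intervalIntegral_kernel_eq_integral_Pfun ha.1 hax hq hqa hw ν]
  simp_rw [sin_mul_sin_mul_y0_eq hρ hν, mul_left_comm _ (1 / (2 * (ρ ^ 2) ^ ν)),
    intervalIntegral.integral_const_mul]
end

section
/- Fix a ∈ (0, π) and a function q : ℝ → ℂ, square-integrable on (0, π), with q(x) = 0 for all x outside (a, π). Let ω(x) = ∫_a^x q(t) dt, ω₁(x) = ∫_{2a}^x q(t) ω(t−a) dt, and for ν ∈ {0,1} let P_ν(x,t) = (∫_{t+a/2}^{x} q(τ) dτ)(∫_a^{t−a/2} q(ξ) dξ) + (−1)^ν ∫_a^{x−t+a/2} q(τ) (∫_{t+τ−a/2}^{x} q(ξ) dξ) dτ. Then for every ν ∈ {0,1} and every x with 2a ≤ x ≤ π: P_ν(x, 3a/2) = (−1)^ν ω₁(x). -/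
/-! At t = 3a/2 the first product in P_ν vanishes, its second factor being an integral over [a, a].
What remains is ∫_a^{x-a} q(τ) ∫_{τ+a}^x q, which is ω₁(x) after swapping the order of integration
over the triangle a < τ, τ + a < t ≤ x. -/

open MeasureTheory Set
open scoped Real

noncomputable def omega1 (a : ℝ) (q : ℝ → ℂ) (x : ℝ) : ℂ :=
  ∫ t in (2 * a)..x, q t * (∫ τ in a..(t - a), q τ)

section RegionFubini

variable {α β 𝕜 : Type*} [MeasurableSpace α] [MeasurableSpace β] [RCLike 𝕜]
  {μ : Measure α} {ν : Measure β} {f : α → 𝕜} {g : β → 𝕜}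
  {A : Set α} {B : α → Set β} {C : Set β} {D : β → Set α}

theorem integral_indicator_mul_prodMk_left {S : Set (α × β)} (hS : MeasurableSet S)
    (hA : ∀ τ t, (τ, t) ∈ S ↔ τ ∈ A ∧ t ∈ B τ) (τ : α) :
    ∫ t, S.indicator (fun p => f p.1 * g p.2) (τ, t) ∂ν
      = A.indicator (fun τ => f τ * ∫ t in B τ, g t ∂ν) τ := by
  by_cases hτ : τ ∈ A
  · have hB : Prod.mk τ ⁻¹' S = B τ := by ext t; simp [hA, hτ]
    rw [indicator_of_mem hτ, ← hB, ← integral_const_mul,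
      ← integral_indicator (measurable_prodMk_left hS)]
    rfl
  · have hτS : ∀ t, (τ, t) ∉ S := fun t h => hτ ((hA τ t).1 h).1
    simp [indicator_of_notMem hτ, indicator_of_notMem (hτS _)]

theorem integral_indicator_mul_prodMk_right {S : Set (α × β)} (hS : MeasurableSet S)
    (hC : ∀ τ t, (τ, t) ∈ S ↔ t ∈ C ∧ τ ∈ D t) (t : β) :
    ∫ τ, S.indicator (fun p => f p.1 * g p.2) (τ, t) ∂μ
      = C.indicator (fun t => g t * ∫ τ in D t, f τ ∂μ) t := by
  by_cases ht : t ∈ C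
  · have hD : (·, t) ⁻¹' S = D t := by ext τ; simp [hC, ht]
    rw [indicator_of_mem ht, ← hD, ← integral_const_mul,
      ← integral_indicator (measurable_prodMk_right hS)]
    simp only [mul_comm (g t)]
    rfl
  · have htS : ∀ τ, (τ, t) ∉ S := fun τ h => ht ((hC τ t).1 h).1
    simp [indicator_of_notMem ht, indicator_of_notMem (htS _)]

theorem setIntegral_mul_setIntegral_swap [SFinite μ] [SFinite ν]
    (hf : IntegrableOn f A μ) (hg : IntegrableOn g C ν) (hAm : MeasurableSet A)
    (hCm : MeasurableSet C) (hS : MeasurableSet {p : α × β | p.1 ∈ A ∧ p.2 ∈ B p.1})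
    (hregion : ∀ τ t, τ ∈ A ∧ t ∈ B τ ↔ t ∈ C ∧ τ ∈ D t) :
    ∫ τ in A, f τ * ∫ t in B τ, g t ∂ν ∂μ = ∫ t in C, g t * ∫ τ in D t, f τ ∂μ ∂ν := by
  set S := {p : α × β | p.1 ∈ A ∧ p.2 ∈ B p.1}
  have hSAC : S ⊆ A ×ˢ C := fun p hp => ⟨hp.1, ((hregion _ _).1 hp).1⟩
  have hint : Integrable (S.indicator fun p => f p.1 * g p.2) (μ.prod ν) := by
    have hAC : IntegrableOn (fun p : α × β => f p.1 * g p.2) (A ×ˢ C) (μ.prod ν) := by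
      rw [IntegrableOn, ← Measure.prod_restrict]
      exact hf.mul_prod hg
    exact (integrable_indicator_iff hS).2 (hAC.mono_set hSAC)
  calc ∫ τ in A, f τ * ∫ t in B τ, g t ∂ν ∂μ
      = ∫ τ, ∫ t, S.indicator (fun p => f p.1 * g p.2) (τ, t) ∂ν ∂μ := by
        simp_rw [integral_indicator_mul_prodMk_left hS (fun _ _ => Iff.rfl),
          integral_indicator hAm]
    _ = ∫ t, ∫ τ, S.indicator (fun p => f p.1 * g p.2) (τ, t) ∂μ ∂ν :=
        integral_integral_swap hint
    _ = ∫ t in C, g t * ∫ τ in D t, f τ ∂μ ∂ν := by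
        simp_rw [integral_indicator_mul_prodMk_right hS hregion, integral_indicator hCm]

theorem intervalIntegral_mul_intervalIntegral_shift_swap {f g : ℝ → 𝕜} {a b c : ℝ}
    (hab : a + c ≤ b) (hf : IntegrableOn f (Ioc a (b - c))) (hg : IntegrableOn g (Ioc (a + c) b)) :
    ∫ τ in a..(b - c), f τ * ∫ t in (τ + c)..b, g t
      = ∫ t in (a + c)..b, g t * ∫ τ in a..(t - c), f τ := by
  have hS : MeasurableSet {p : ℝ × ℝ | p.1 ∈ Ioc a (b - c) ∧ p.2 ∈ Ioc (p.1 + c) b} := by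
    measurability
  have hregion : ∀ τ t, τ ∈ Ioc a (b - c) ∧ t ∈ Ioc (τ + c) b ↔
      t ∈ Ioc (a + c) b ∧ τ ∈ Ioo a (t - c) := by
    intro τ t
    simp only [mem_Ioc, mem_Ioo]
    constructor <;> rintro ⟨⟨h₁, h₂⟩, h₃, h₄⟩ <;> refine ⟨⟨?_, ?_⟩, ?_, ?_⟩ <;> linarith
  rw [intervalIntegral.integral_of_le (by linarith), intervalIntegral.integral_of_le hab]
  calc ∫ τ in Ioc a (b - c), f τ * ∫ t in (τ + c)..b, g t
      = ∫ τ in Ioc a (b - c), f τ * ∫ t in Ioc (τ + c) b, g t :=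
        setIntegral_congr_fun measurableSet_Ioc fun τ hτ => by
          rw [intervalIntegral.integral_of_le (by linarith [hτ.2])]
    _ = ∫ t in Ioc (a + c) b, g t * ∫ τ in Ioo a (t - c), f τ :=
        setIntegral_mul_setIntegral_swap hf hg measurableSet_Ioc measurableSet_Ioc hS hregion
    _ = ∫ t in Ioc (a + c) b, g t * ∫ τ in a..(t - c), f τ :=
        setIntegral_congr_fun measurableSet_Ioc fun t ht => by
          rw [intervalIntegral.integral_of_le (by linarith [ht.1]), integral_Ioc_eq_integral_Ioo]

end RegionFubini

theorem statement6_general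
    (a : ℝ) (ha : a ∈ Set.Ioo 0 π)
    (q : ℝ → ℂ)
    (hq2 : MemLp q 2 (volume.restrict (Set.Ioo 0 π))) :
    ∀ ν : ℕ, (ν = 0 ∨ ν = 1) → ∀ x : ℝ, 2 * a ≤ x → x ≤ π →
      Pfun a q ν x (3 * a / 2) = (-1) ^ ν * omega1 a q x := by
  intro ν _ x hx hxπ
  have hq : IntegrableOn q (Ioc 0 π) :=
    (integrableOn_Ioc_iff_integrableOn_Ioo).2 (hq2.integrable one_le_two)
  have hswap := intervalIntegral_mul_intervalIntegral_shift_swap (c := a) (by linarith)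
    (hq.mono_set (Ioc_subset_Ioc ha.1.le (by linarith [ha.1])))
    (hq.mono_set (Ioc_subset_Ioc (by linarith [ha.1]) hxπ))
  rw [← two_mul] at hswap
  have hlower : 3 * a / 2 - a / 2 = a := by ring
  have hupper : x - 3 * a / 2 + a / 2 = x - a := by ring
  have hshift : ∀ τ, 3 * a / 2 + τ - a / 2 = τ + a := fun τ => by ring
  simp only [Pfun, omega1, hlower, hupper, hshift, intervalIntegral.integral_same, mul_zero,
    zero_add, hswap]

theorem statement6
    (a : ℝ) (ha : a ∈ Set.Ioo 0 π)
    (q : ℝ → ℂ)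
    (hq2 : MemLp q 2 (volume.restrict (Set.Ioo 0 π)))
    (hq0 : ∀ x : ℝ, x ∉ Set.Ioo a π → q x = 0) :
    ∀ ν : ℕ, (ν = 0 ∨ ν = 1) → ∀ x : ℝ, 2 * a ≤ x → x ≤ π →
      Pfun a q ν x (3 * a / 2) = (-1) ^ ν * omega1 a q x :=
  statement6_general a ha q hq2
end

section
/- Fix a ∈ (0, π) and a function q : ℝ → ℂ, square-integrable on (0, π), with q(x) = 0 for all x outside (a, π). Fix ρ ∈ ℂ, ρ ≠ 0, λ = ρ². For ν ∈ {0,1} let y_{0,0}(x,λ) = cos(ρx), y_{1,0}(x,λ) = sin(ρx)/ρ, y_{ν,1}(x,λ) = ∫_a^x (sin ρ(x−t)/ρ) q(t) y_{ν,0}(t−a, λ) dt, and ω(x) = ∫_a^x q(t) dt. Then for every ν ∈ {0,1} and every x ∈ (a, π), the function x ↦ y_{ν,1}(x,λ) is differentiable at x with derivative (ω(x)/2) y_{ν,0}(x−a, λ) + ((−1)^ν/2) ∫_a^x q(t) y_{ν,0}(x−2t+a, λ) dt. -/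
open MeasureTheory Set
open scoped Real

/-! The kernel `K(s, t) = sin ρ(s - t) / ρ · y₀(t - a)` vanishes on the diagonal, so
differentiating `∫_a^s K(s, t) q(t) dt` produces no boundary term even though `q` is merely
integrable: the piece `∫_x^s K(s, t) q(t) dt` is `O(|s - x| · ∫_x^s |q|) = o(s - x)` by the mean
value theorem. What is left is `∫_a^x ∂ₛK(x, t) q(t) dt`, and the product-to-sum formulas for
`cos ρ(x - t) · y₀(t - a)` turn it into the stated expression. -/

open Filter Topology Asymptotics Function
open scoped Interval

section Leibniz

variable {K K' : ℝ → ℝ → ℂ} {q : ℝ → ℂ}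

lemma norm_le_mul_abs_sub_of_diag_eq_zero {S : Set ℝ} {C : ℝ} (hS : Convex ℝ S)
    (hK : ∀ s t, HasDerivAt (fun s => K s t) (K' s t) s)
    (hC : ∀ s ∈ S, ∀ t ∈ S, ‖K' s t‖ ≤ C) (hdiag : ∀ t, K t t = 0)
    {s t : ℝ} (hs : s ∈ S) (ht : t ∈ S) : ‖K s t‖ ≤ C * |s - t| := by
  simpa [hdiag, Real.norm_eq_abs] using hS.norm_image_sub_le_of_norm_hasDerivWithin_le
    (f := fun r => K r t) (fun r _ => (hK r t).hasDerivWithinAt) (fun r hr => hC r hr t ht) ht hs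

lemma hasDerivAt_integral_from_of_diag_eq_zero {S : Set ℝ} {C x : ℝ}
    (hq : ∀ u v, IntervalIntegrable q volume u v)
    (hK : ∀ s t, HasDerivAt (fun s => K s t) (K' s t) s)
    (hS : S ∈ 𝓝 x) (hSc : Convex ℝ S) (hC : ∀ s ∈ S, ∀ t ∈ S, ‖K' s t‖ ≤ C)
    (hdiag : ∀ t, K t t = 0) :
    HasDerivAt (fun s => ∫ t in x..s, K s t * q t) 0 x := by
  rw [hasDerivAt_iff_isLittleO]
  simp only [intervalIntegral.integral_same, sub_zero, smul_zero]
  have hx : x ∈ S := mem_of_mem_nhds hS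
  have hC0 : 0 ≤ C := (norm_nonneg _).trans (hC x hx x hx)
  have hbound : ∀ᶠ s in 𝓝 x,
      ‖∫ t in x..s, K s t * q t‖ ≤ C * ‖(∫ t in x..s, ‖q t‖) * (s - x)‖ := by
    filter_upwards [hS] with s hs
    have hxs : [[x, s]] ⊆ S := hSc.ordConnected.uIcc_subset hx hs
    calc ‖∫ t in x..s, K s t * q t‖ ≤ |∫ t in x..s, C * |s - x| * ‖q t‖| := by
          refine intervalIntegral.norm_integral_le_abs_of_norm_le ?_ ((hq x s).norm.const_mul _)
          filter_upwards [ae_restrict_mem measurableSet_uIoc] with t ht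
          have ht' := uIoc_subset_uIcc ht
          rw [norm_mul]
          gcongr
          exact (norm_le_mul_abs_sub_of_diag_eq_zero hSc hK hC hdiag hs (hxs ht')).trans
            (mul_le_mul_of_nonneg_left (abs_sub_right_of_mem_uIcc ht') hC0)
      _ = C * ‖(∫ t in x..s, ‖q t‖) * (s - x)‖ := by
          rw [intervalIntegral.integral_const_mul, abs_mul, abs_mul, abs_of_nonneg hC0, abs_abs,
            norm_mul, Real.norm_eq_abs, Real.norm_eq_abs]
          ring
  have hprimitive : Tendsto (fun s => ∫ t in x..s, ‖q t‖) (𝓝 x) (𝓝 0) := by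
    simpa using (intervalIntegral.continuous_primitive (fun u v => (hq u v).norm) x).tendsto x
  refine (IsBigO.of_bound C hbound).trans_isLittleO ?_
  simpa using ((isLittleO_one_iff ℝ).2 hprimitive).mul_isBigO (isBigO_refl (fun s => s - x) _)


theorem hasDerivAt_integral_kernel_mul (hq : ∀ u v, IntervalIntegrable q volume u v)
    (hKc : Continuous (uncurry K)) (hK : ∀ s t, HasDerivAt (fun s => K s t) (K' s t) s)
    (hK'c : Continuous (uncurry K')) (hdiag : ∀ t, K t t = 0) (a x : ℝ) :
    HasDerivAt (fun s => ∫ t in a..s, K s t * q t) (∫ t in a..x, K' x t * q t) x := by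
  set S := Icc (min a x - 1) (max a x + 1)
  have hS : S ∈ 𝓝 x :=
    Icc_mem_nhds (by linarith [min_le_right a x]) (by linarith [le_max_right a x])
  have hball : Metric.ball x 1 ⊆ S := fun s hs => by
    rw [Metric.mem_ball, Real.dist_eq, abs_lt] at hs
    constructor <;> linarith [min_le_right a x, le_max_right a x]
  have hax : Ι a x ⊆ S := uIoc_subset_uIcc.trans
    (uIcc_subset_Icc ⟨by linarith [min_le_left a x], by linarith [le_max_left a x]⟩
      ⟨by linarith [min_le_right a x], by linarith [le_max_right a x]⟩)
  obtain ⟨C, hC⟩ :=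
    (isCompact_Icc.prod isCompact_Icc : IsCompact (S ×ˢ S)).exists_bound_of_continuousOn
      hK'c.continuousOn
  have hC' : ∀ s ∈ S, ∀ t ∈ S, ‖K' s t‖ ≤ C := fun s hs t ht => hC (s, t) ⟨hs, ht⟩
  have hq_meas := (intervalIntegrable_iff.1 (hq a x)).aestronglyMeasurable
  have hfixed := intervalIntegral.hasDerivAt_integral_of_dominated_loc_of_deriv_le
    (F := fun s t => K s t * q t) (F' := fun s t => K' s t * q t) (bound := fun t => C * ‖q t‖)
    (Metric.ball_mem_nhds x one_pos)
    (Eventually.of_forall fun s =>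
      ((hKc.uncurry_left s).aestronglyMeasurable.mul hq_meas))
    ((hq a x).continuousOn_mul (hKc.uncurry_left x).continuousOn)
    ((hK'c.uncurry_left x).aestronglyMeasurable.mul hq_meas)
    (ae_of_all _ fun t ht s hs => by
      rw [norm_mul]
      exact mul_le_mul_of_nonneg_right (hC' s (hball hs) t (hax ht)) (norm_nonneg _))
    ((hq a x).norm.const_mul C)
    (ae_of_all _ fun t _ s _ => (hK s t).mul_const (q t))
  have hmoving := hasDerivAt_integral_from_of_diag_eq_zero hq hK hS (convex_Icc _ _) hC' hdiag
  have hsplit : (fun s => ∫ t in a..s, K s t * q t)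
      = fun s => (∫ t in a..x, K s t * q t) + ∫ t in x..s, K s t * q t := by
    funext s
    exact (intervalIntegral.integral_add_adjacent_intervals
      ((hq a x).continuousOn_mul (hKc.uncurry_left s).continuousOn)
      ((hq x s).continuousOn_mul (hKc.uncurry_left s).continuousOn)).symm
  rw [hsplit, ← add_zero (∫ t in a..x, K' x t * q t)]
  exact hfixed.2.add hmoving

end Leibniz

@[fun_prop]
lemma continuous_y0 (ρ : ℂ) (ν : ℕ) : Continuous (y0 ρ ν) := by
  unfold y0
  split_ifs <;> fun_prop

lemma hasDerivAt_sin_mul_sub_div {ρ : ℂ} (hρ : ρ ≠ 0) (s t : ℝ) :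
    HasDerivAt (fun s : ℝ => Complex.sin (ρ * ((s - t : ℝ) : ℂ)) / ρ)
      (Complex.cos (ρ * ((s - t : ℝ) : ℂ))) s := by
  have h :=
    ((((hasDerivAt_id (s : ℂ)).sub_const (t : ℂ)).const_mul ρ).csin.div_const ρ).comp_ofReal
  rw [mul_one, mul_div_cancel_right₀ _ hρ] at h
  simpa using h

lemma cos_mul_y0_sub (ρ : ℂ) {ν : ℕ} (hν : ν = 0 ∨ ν = 1) (x t a : ℝ) :
    Complex.cos (ρ * ((x - t : ℝ) : ℂ)) * y0 ρ ν (t - a)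
      = (y0 ρ ν (x - a) + (-1) ^ ν * y0 ρ ν (x - 2 * t + a)) / 2 := by
  have hsum :
      (ρ * ((x - a : ℝ) : ℂ) + ρ * ((x - 2 * t + a : ℝ) : ℂ)) / 2 = ρ * ((x - t : ℝ) : ℂ) := by
    push_cast; ring
  have hdiff :
      (ρ * ((x - a : ℝ) : ℂ) - ρ * ((x - 2 * t + a : ℝ) : ℂ)) / 2 = ρ * ((t - a : ℝ) : ℂ) := by
    push_cast; ring
  rcases hν with rfl | rfl
  · simp only [y0, if_true, pow_zero, one_mul]
    rw [Complex.cos_add_cos, hsum, hdiff]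
    ring
  · simp only [y0, one_ne_zero, if_false, pow_one, neg_one_mul]
    rw [← sub_eq_add_neg, ← sub_div, Complex.sin_sub_sin, hsum, hdiff]
    ring

lemma integral_cos_mul_y0_sub_mul {q : ℝ → ℂ} (hq : ∀ u v, IntervalIntegrable q volume u v)
    (ρ : ℂ) {ν : ℕ} (hν : ν = 0 ∨ ν = 1) (a x : ℝ) :
    ∫ t in a..x, Complex.cos (ρ * ((x - t : ℝ) : ℂ)) * y0 ρ ν (t - a) * q t
      = (∫ t in a..x, q t) / 2 * y0 ρ ν (x - a)
        + ((-1) ^ ν / 2) * ∫ t in a..x, q t * y0 ρ ν (x - 2 * t + a) := by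
  have hint : IntervalIntegrable (fun t => q t * y0 ρ ν (x - 2 * t + a)) volume a x :=
    (hq a x).mul_continuousOn (by fun_prop)
  calc ∫ t in a..x, Complex.cos (ρ * ((x - t : ℝ) : ℂ)) * y0 ρ ν (t - a) * q t
      = ∫ t in a..x, (y0 ρ ν (x - a) / 2 * q t
          + (-1) ^ ν / 2 * (q t * y0 ρ ν (x - 2 * t + a))) :=
        intervalIntegral.integral_congr fun t _ => by rw [cos_mul_y0_sub ρ hν]; ring
    _ = _ := by
        rw [intervalIntegral.integral_add ((hq a x).const_mul _) (hint.const_mul _),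
          intervalIntegral.integral_const_mul, intervalIntegral.integral_const_mul]
        ring

theorem statement7_general
    (a : ℝ) (ha : a ∈ Set.Ioo 0 π)
    (q : ℝ → ℂ)
    (hq2 : MemLp q 2 (volume.restrict (Set.Ioo 0 π)))
    (hq0 : ∀ x : ℝ, x ∉ Set.Ioo a π → q x = 0)
    (ρ : ℂ) (hρ : ρ ≠ 0) :
    ∀ ν : ℕ, (ν = 0 ∨ ν = 1) → ∀ x ∈ Set.Ioo a π,
      HasDerivAt (fun y => ySeq a q ρ ν 1 y)
        ((∫ t in a..x, q t) / 2 * y0 ρ ν (x - a)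
          + ((-1) ^ ν / 2) * ∫ t in a..x, q t * y0 ρ ν (x - 2 * t + a)) x := by
  have hq : Integrable q :=
    IntegrableOn.integrable_of_forall_notMem_eq_zero (hq2.integrable one_le_two) fun t ht =>
      hq0 t fun h => ht ⟨ha.1.trans h.1, h.2⟩
  rintro ν hν x -
  have hySeq : (fun y => ySeq a q ρ ν 1 y) = fun s => ∫ t in a..s,
      Complex.sin (ρ * ((s - t : ℝ) : ℂ)) / ρ * y0 ρ ν (t - a) * q t := by
    funext s
    exact intervalIntegral.integral_congr fun t _ => mul_right_comm _ _ _
  rw [hySeq, ← integral_cos_mul_y0_sub_mul (fun u v => hq.intervalIntegrable) ρ hν]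
  exact hasDerivAt_integral_kernel_mul (fun u v => hq.intervalIntegrable) (by fun_prop)
    (fun s t => (hasDerivAt_sin_mul_sub_div hρ s t).mul_const _) (by fun_prop)
    (fun t => by simp) a x

theorem statement7
    (a : ℝ) (ha : a ∈ Set.Ioo 0 π)
    (q : ℝ → ℂ)
    (hq2 : MemLp q 2 (volume.restrict (Set.Ioo 0 π)))
    (hq0 : ∀ x : ℝ, x ∉ Set.Ioo a π → q x = 0)
    (ρ : ℂ) (hρ : ρ ≠ 0) (lam : ℂ) (hlam : lam = ρ ^ 2) :
    ∀ ν : ℕ, (ν = 0 ∨ ν = 1) → ∀ x ∈ Set.Ioo a π,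
      HasDerivAt (fun y => ySeq a q ρ ν 1 y)
        ((∫ t in a..x, q t) / 2 * y0 ρ ν (x - a)
          + ((-1) ^ ν / 2) * ∫ t in a..x, q t * y0 ρ ν (x - 2 * t + a)) x :=
  statement7_general a ha q hq2 hq0 ρ hρ
end
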